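/- For all real a ≥ 0.2448 and all real x ≥ 6, the function f(x) = (1 - e^{-a x}) / (ln(1 + x) + 0.005) is strictly decreasing in x. -/

import Mathlib

/-!
Writing `L x = log (1 + x) + 0.005`, the derivative of the quotient is negative exactly when
`a (1 + x) L x + 1 < exp (a x)`. The gap `exp (a y) - a (1 + y) L y` has derivative
`a (exp (a y) - L y - 1)`, which is positive for `y ≥ 6` by the tangent line of `exp` at `1.4688`
and `log y ≤ y / e`; so it suffices to check that the gap exceeds `1` at `y = 6`, which is a
numerical fact about `exp 1.4688` and `log 7`.
-/

open Real Set

lemma Real.exp_mul_sub_add_one_le_exp (t₀ t : ℝ) : exp t₀ * (t - t₀ + 1) ≤ exp t :=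
  calc exp t₀ * (t - t₀ + 1) ≤ exp t₀ * exp (t - t₀) :=
        mul_le_mul_of_nonneg_left (add_one_le_exp _) (exp_pos _).le
    _ = exp t := by rw [← exp_add, add_sub_cancel]

lemma Real.log_le_div_exp_one {y : ℝ} (hy : 0 < y) : log y ≤ y / exp 1 := by
  have h := log_le_sub_one_of_pos (div_pos hy (exp_pos 1))
  rw [log_div hy.ne' (exp_pos 1).ne', log_exp] at h
  linarith

lemma Real.exp_1_4688_gt_d4 : (4.3436 : ℝ) < exp 1.4688 := by
  refine lt_of_lt_of_le ?_ (sum_le_exp_of_nonneg (by norm_num) 10)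
  simp only [Finset.sum_range_succ, Finset.sum_range_zero]
  norm_num [Nat.factorial]

lemma Real.log_seven_lt_d5 : log 7 < 1.94592 := by
  rw [log_lt_iff_lt_exp (by norm_num)]
  refine lt_of_lt_of_le ?_ (sum_le_exp_of_nonneg (by norm_num) 14)
  simp only [Finset.sum_range_succ, Finset.sum_range_zero]
  norm_num [Nat.factorial]

section

variable {a c x : ℝ}

lemma hasDerivAt_log_one_add (hx : 1 + x ≠ 0) :
    HasDerivAt (fun y => log (1 + y)) (1 + x)⁻¹ x := by
  simpa using ((hasDerivAt_id x).const_add 1).log hx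

lemma hasDerivAt_exp_sub_mul_log (hx : 1 + x ≠ 0) :
    HasDerivAt (fun y => exp (a * y) - a * ((1 + y) * (log (1 + y) + c)))
      (a * (exp (a * x) - (log (1 + x) + c + 1))) x := by
  have hexp : HasDerivAt (fun y => exp (a * y)) (exp (a * x) * a) x := by
    simpa using ((hasDerivAt_id x).const_mul a).exp
  have hprod := ((hasDerivAt_id x).const_add 1).mul ((hasDerivAt_log_one_add hx).add_const c)
  refine (hexp.sub (hprod.const_mul a)).congr_deriv ?_
  rw [id, mul_inv_cancel₀ hx]
  ring

lemma hasDerivAt_one_sub_exp_div_log (hx : 1 + x ≠ 0) (hL : log (1 + x) + c ≠ 0) :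
    HasDerivAt (fun y => (1 - exp (-a * y)) / (log (1 + y) + c))
      ((a * exp (-a * x) * (log (1 + x) + c) - (1 - exp (-a * x)) * (1 + x)⁻¹)
        / (log (1 + x) + c) ^ 2) x := by
  have hexp : HasDerivAt (fun y => exp (-a * y)) (exp (-a * x) * -a) x := by
    simpa using ((hasDerivAt_id x).const_mul (-a)).exp
  have hnum := (hasDerivAt_const x (1 : ℝ)).sub hexp
  refine (hnum.div ((hasDerivAt_log_one_add hx).add_const c) hL).congr_deriv ?_
  simp only [Pi.sub_apply]
  ring

lemma monotoneOn_exp_sub_mul_log {x₀ : ℝ} (ha : 0 ≤ a) (hx₀ : -1 < x₀)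
    (h : ∀ y, x₀ < y → log (1 + y) + c + 1 ≤ exp (a * y)) :
    MonotoneOn (fun y => exp (a * y) - a * ((1 + y) * (log (1 + y) + c))) (Ici x₀) := by
  have hD : ∀ y ∈ Ici x₀, HasDerivAt (fun y => exp (a * y) - a * ((1 + y) * (log (1 + y) + c)))
      (a * (exp (a * y) - (log (1 + y) + c + 1))) y :=
    fun y hy => hasDerivAt_exp_sub_mul_log (by linarith [mem_Ici.mp hy])
  refine monotoneOn_of_hasDerivWithinAt_nonneg (convex_Ici x₀)
    (fun y hy => (hD y hy).continuousAt.continuousWithinAt)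
    (fun y hy => (hD y (interior_subset hy)).hasDerivWithinAt) fun y hy => ?_
  rw [interior_Ici, mem_Ioi] at hy
  exact mul_nonneg ha (sub_nonneg.mpr (h y hy))

lemma strictAntiOn_one_sub_exp_div_log {x₀ : ℝ} (hx₀ : 0 ≤ x₀) (hc : 0 < c)
    (h : ∀ x, x₀ < x → a * (1 + x) * (log (1 + x) + c) + 1 < exp (a * x)) :
    StrictAntiOn (fun x => (1 - exp (-a * x)) / (log (1 + x) + c)) (Ici x₀) := by
  have hL : ∀ x ∈ Ici x₀, 0 < log (1 + x) + c := fun x hx =>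
    add_pos_of_nonneg_of_pos (log_nonneg (by linarith [mem_Ici.mp hx])) hc
  have hD : ∀ x ∈ Ici x₀, HasDerivAt (fun y => (1 - exp (-a * y)) / (log (1 + y) + c))
      ((a * exp (-a * x) * (log (1 + x) + c) - (1 - exp (-a * x)) * (1 + x)⁻¹)
        / (log (1 + x) + c) ^ 2) x :=
    fun x hx => hasDerivAt_one_sub_exp_div_log (by linarith [mem_Ici.mp hx]) (hL x hx).ne'
  refine strictAntiOn_of_hasDerivWithinAt_neg (convex_Ici x₀)
    (fun x hx => (hD x hx).continuousAt.continuousWithinAt)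
    (fun x hx => (hD x (interior_subset hx)).hasDerivWithinAt) fun x hx => ?_
  rw [interior_Ici, mem_Ioi] at hx
  have hx1 : 0 < 1 + x := by linarith
  refine div_neg_of_neg_of_pos ?_ (pow_pos (hL x (mem_Ici.mpr hx.le)) 2)
  have hscaled := mul_lt_mul_of_pos_left (h x hx) (mul_pos (exp_pos (-a * x)) (inv_pos.mpr hx1))
  have hlhs : exp (-a * x) * (1 + x)⁻¹ * (a * (1 + x) * (log (1 + x) + c) + 1)
      = a * exp (-a * x) * (log (1 + x) + c) + exp (-a * x) * (1 + x)⁻¹ := by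
    field_simp
  have hrhs : exp (-a * x) * (1 + x)⁻¹ * exp (a * x) = (1 + x)⁻¹ := by
    rw [mul_right_comm, ← exp_add]
    simp
  rw [hlhs, hrhs] at hscaled
  linarith

end

lemma exp_1_4688_mul_le_exp {t : ℝ} (ht : 1.4688 ≤ t) : 4.3436 * (t - 0.4688) ≤ exp t :=
  calc 4.3436 * (t - 0.4688) ≤ exp 1.4688 * (t - 1.4688 + 1) := by
        nlinarith [exp_1_4688_gt_d4]
    _ ≤ exp t := exp_mul_sub_add_one_le_exp _ _

lemma log_add_lt_exp_mul {a y : ℝ} (ha : 0.2448 ≤ a) (hy : 6 ≤ y) :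
    log (1 + y) + 0.005 + 1 < exp (a * y) := by
  have hexp := exp_1_4688_mul_le_exp (show 1.4688 ≤ a * y by nlinarith)
  have hlog : log (1 + y) ≤ 0.368 * (1 + y) :=
    calc log (1 + y) ≤ (1 + y) / exp 1 := log_le_div_exp_one (by linarith)
      _ ≤ 0.368 * (1 + y) := by
        rw [div_le_iff₀ (exp_pos 1)]
        nlinarith [exp_one_gt_d9]
  nlinarith

lemma one_lt_exp_sub_mul_log_seven {a : ℝ} (ha : 0.2448 ≤ a) :
    1 < exp (a * 6) - a * ((1 + 6) * (log (1 + 6) + 0.005)) := by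
  have hexp := exp_1_4688_mul_le_exp (show 1.4688 ≤ a * 6 by linarith)
  norm_num only [show (1 : ℝ) + 6 = 7 by norm_num]
  nlinarith [log_seven_lt_d5]

lemma mul_log_add_one_lt_exp {a x : ℝ} (ha : 0.2448 ≤ a) (hx : 6 ≤ x) :
    a * (1 + x) * (log (1 + x) + 0.005) + 1 < exp (a * x) := by
  have hmono := monotoneOn_exp_sub_mul_log (c := 0.005) (by linarith) (by norm_num)
    fun y hy => (log_add_lt_exp_mul ha hy.le).le
  have hgap := hmono (mem_Ici.mpr le_rfl) (mem_Ici.mpr hx) hx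
  linarith [one_lt_exp_sub_mul_log_seven ha]

theorem stmt_2 (a : ℝ) (ha : 0.2448 ≤ a) :
    StrictAntiOn (fun x : ℝ => (1 - Real.exp (-a * x)) / (Real.log (1 + x) + 0.005))
      (Set.Ici 6) :=
  strictAntiOn_one_sub_exp_div_log (by norm_num) (by norm_num)
    fun _ hx => mul_log_add_one_lt_exp ha hx.le
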